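/- Fix a real parameter g with −2 < g < 2 and set h = √(1 − g²/4), G = g/h. Then for every (b₀,q₀) with q₀ > 0, the function q ↦ f(b₀,q) is differentiable at q₀ with derivative ∂f/∂q = h·b₀ / B(b₀,q₀). -/

import Mathlib

noncomputable def finsH (g : ℝ) : ℝ := Real.sqrt (1 - g ^ 2 / 4)

noncomputable def finsG (g : ℝ) : ℝ := g / finsH g

/-- The characteristic quadratic form `B(b,q) = b² + g·q·b + q²`. -/
noncomputable def finsB (g b q : ℝ) : ℝ := b ^ 2 + g * q * b + q ^ 2

/-- `L(b,q) = q + (g/2)·b`. -/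
noncomputable def finsL (g b q : ℝ) : ℝ := q + (g / 2) * b

/-- The piecewise-defined Finsleroid function `f` on the half-plane `q > 0`. -/
noncomputable def finsF (g b q : ℝ) : ℝ :=
  if 0 < b then -Real.arctan (finsG g / 2) + Real.arctan (finsL g b q / (finsH g * b))
  else if b < 0 then
    Real.pi - Real.arctan (finsG g / 2) + Real.arctan (finsL g b q / (finsH g * b))
  else Real.pi / 2 - Real.arctan (finsG g / 2)

/-- The Finsleroid-regular metric function `K(b,q) = √(B(b,q))·exp(−(G/2)·f(b,q))`. -/
noncomputable def finsK (g b q : ℝ) : ℝ :=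
  Real.sqrt (finsB g b q) * Real.exp (-(finsG g / 2) * finsF g b q)

/-! For fixed `b ≠ 0`, `f(b, ·)` is a constant plus `arctan (L / (h b))`, an arctangent of an affine
function of `q`, so its derivative is `h b / ((h b)² + L²)`; completing the square shows that this
denominator is `B`. For `b = 0`, `f(0, ·)` is constant and `h b / B = 0`. -/

theorem Real.hasDerivAt_arctan_add_div (a c x : ℝ) (hc : c ≠ 0) :
    HasDerivAt (fun q => Real.arctan ((q + a) / c)) (c / (c ^ 2 + (x + a) ^ 2)) x := by
  refine (((hasDerivAt_id' x).add_const a).div_const c).arctan.congr_deriv ?_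
  field_simp

lemma finsH_pos {g : ℝ} (hg1 : -2 < g) (hg2 : g < 2) : 0 < finsH g :=
  Real.sqrt_pos.mpr (by nlinarith)

lemma finsB_eq_sq_add_sq {g : ℝ} (hg1 : -2 < g) (hg2 : g < 2) (b q : ℝ) :
    finsB g b q = (finsH g * b) ^ 2 + finsL g b q ^ 2 := by
  rw [finsB, finsL, mul_pow, finsH, Real.sq_sqrt (by nlinarith)]
  ring

lemma hasDerivAt_arctan_finsL_div {g : ℝ} (hg1 : -2 < g) (hg2 : g < 2) {b : ℝ} (hb : b ≠ 0)
    (q₀ : ℝ) :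
    HasDerivAt (fun q => Real.arctan (finsL g b q / (finsH g * b)))
      (finsH g * b / finsB g b q₀) q₀ := by
  rw [finsB_eq_sq_add_sq hg1 hg2]
  exact Real.hasDerivAt_arctan_add_div _ _ q₀ (mul_ne_zero (finsH_pos hg1 hg2).ne' hb)

theorem finsleroid_f_deriv_q_general (g : ℝ) (hg1 : -2 < g) (hg2 : g < 2)
    (b₀ q₀ : ℝ) :
    HasDerivAt (fun q : ℝ => finsF g b₀ q)
      (finsH g * b₀ / finsB g b₀ q₀) q₀ := by
  rcases lt_trichotomy b₀ 0 with hb | rfl | hb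
  · simpa only [finsF, hb, hb.not_gt, if_true, if_false] using
      (hasDerivAt_arctan_finsL_div hg1 hg2 hb.ne q₀).const_add
        (Real.pi - Real.arctan (finsG g / 2))
  · simpa only [finsF, lt_irrefl, if_false, mul_zero, zero_div] using
      hasDerivAt_const q₀ (Real.pi / 2 - Real.arctan (finsG g / 2))
  · simpa only [finsF, hb, if_true] using
      (hasDerivAt_arctan_finsL_div hg1 hg2 hb.ne' q₀).const_add (-Real.arctan (finsG g / 2))

/-- for `q₀ > 0`, the function `q ↦ f(b₀,q)` is differentiable at
`q₀` with derivative `∂f/∂q = h·b₀ / B(b₀,q₀)`. -/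
theorem finsleroid_f_deriv_q (g : ℝ) (hg1 : -2 < g) (hg2 : g < 2)
    (b₀ q₀ : ℝ) (hq : 0 < q₀) :
    HasDerivAt (fun q : ℝ => finsF g b₀ q)
      (finsH g * b₀ / finsB g b₀ q₀) q₀ :=
  finsleroid_f_deriv_q_general g hg1 hg2 b₀ q₀
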